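/- With D constructed from K_{2n} as above, every perfect matching M of K_{2n} extends to a perfect matching M* of D consisting of the crossing edges {[u,v],[v,u]} for {u,v} ∈ M together with, in each cycle C^v, the unique perfect matching of the path obtained by deleting the vertex [v, M(v)] (where M(v) is the vertex matched to v by M). -/

import Mathlib

/-!
Deleting `[v, f v]` from the odd cycle `C^v` leaves a path with an even number of vertices,
whose only perfect matching pairs the vertices at distances `2i+1` and `2i+2` from `[v, f v]`
along `σ v`. Together with the crossing edges `{[v, f v], [f v, v]}` these matchings form a
fixed-point-free involution of the vertices of `D` moving along edges, i.e. a perfect matching.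
Conversely, in any perfect matching with the prescribed crossing edges, `[v, f v]` is matched
across and every other vertex of `C^v` inside `C^v`, so induction along the path from `[v, f v]`
forces it to agree with the one above.
-/

/-- Vertices of the graph `D`: pairs `[v,u]` with `v ≠ u` of vertices of `K_{2n}`. -/
abbrev Vt (n : ℕ) := {p : Fin (2*n) × Fin (2*n) // p.1 ≠ p.2}

/-- The graph `D` obtained from `K_{2n}` by replacing each vertex `v` by a cycle `C^v`
of length `2n-1` on the vertices `[v,u]` (`u ≠ v`), whose cyclic order is given by the
permutation `σ v` (a cycle fixing exactly `v`), and adding the crossing edge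
`{[v,u],[u,v]}` for every edge `{u,v}` of `K_{2n}`. -/
def matchGraph (n : ℕ) (σ : Fin (2*n) → Equiv.Perm (Fin (2*n))) : SimpleGraph (Vt n) :=
  SimpleGraph.fromRel (fun a b =>
    (a.1.1 = b.1.2 ∧ a.1.2 = b.1.1) ∨ (a.1.1 = b.1.1 ∧ σ a.1.1 a.1.2 = b.1.2))

namespace Equiv.Perm

variable {α : Type*}

open Classical in
noncomputable def cycleIndex (c : Perm α) (x y : α) : ℕ :=
  if h : ∃ k : ℕ, (c ^ k) x = y then Nat.find h else 0

/-- The matching `{c x, c² x}, {c³ x, c⁴ x}, …` of the path left by deleting `x` from its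
cycle. -/
noncomputable def pathPartner (c : Perm α) (x y : α) : α :=
  if Even (c.cycleIndex x y) then c⁻¹ y else c y

variable {c : Perm α} {x y : α}

theorem cycleIndex_le {k : ℕ} (hk : (c ^ k) x = y) : c.cycleIndex x y ≤ k := by
  classical
  rw [cycleIndex, dif_pos ⟨k, hk⟩]
  exact Nat.find_min' _ hk

@[simp]
theorem cycleIndex_self : c.cycleIndex x x = 0 :=
  Nat.le_zero.1 (cycleIndex_le (k := 0) rfl)

theorem apply_pathPartner_eq_or : c.pathPartner x y = c y ∨ c (c.pathPartner x y) = y := by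
  unfold pathPartner
  split_ifs
  · exact Or.inr (c.apply_symm_apply y)
  · exact Or.inl rfl

theorem pathPartner_ne_of_isFixedPt {w : α} (hw : c w = w) (hyw : y ≠ w) :
    c.pathPartner x y ≠ w := fun h => by
  rcases apply_pathPartner_eq_or (c := c) (x := x) (y := y) with h' | h' <;> rw [h] at h'
  · exact hyw (c.injective (h'.symm.trans hw.symm))
  · exact hyw (h'.symm.trans hw)

theorem pathPartner_ne_self (hy : c y ≠ y) : c.pathPartner x y ≠ y := by
  intro h
  rcases apply_pathPartner_eq_or (c := c) (x := x) (y := y) with h' | h' <;> rw [h] at h'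
  exacts [hy h'.symm, hy h']

section Finite

variable [Finite α]

theorem SameCycle.pow_cycleIndex_apply (hy : c.SameCycle x y) : (c ^ c.cycleIndex x y) x = y := by
  classical
  rw [cycleIndex, dif_pos hy.exists_nat_pow_eq]
  exact Nat.find_spec hy.exists_nat_pow_eq

theorem SameCycle.cycleIndex_eq_zero_iff (hy : c.SameCycle x y) : c.cycleIndex x y = 0 ↔ y = x :=
  ⟨fun h => by simpa [h] using hy.pow_cycleIndex_apply.symm, fun h => h ▸ cycleIndex_self⟩

theorem SameCycle.cycleIndex_lt_period (hy : c.SameCycle x y) :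
    c.cycleIndex x y < MulAction.period c x := by
  have hpos := MulAction.period_pos_of_orderOf_pos (orderOf_pos c) x
  refine (cycleIndex_le (k := c.cycleIndex x y % _) ?_).trans_lt (Nat.mod_lt _ hpos)
  rw [← Perm.smul_def, MulAction.pow_mod_period_smul, Perm.smul_def, hy.pow_cycleIndex_apply]

theorem SameCycle.cycleIndex_apply (hy : c.SameCycle x y) (hcy : c y ≠ x) :
    c.cycleIndex x (c y) = c.cycleIndex x y + 1 := by
  have hcy' : c.SameCycle x (c y) := sameCycle_apply_right.2 hy
  have hpos : c.cycleIndex x (c y) ≠ 0 := mt hcy'.cycleIndex_eq_zero_iff.1 hcy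
  refine le_antisymm (cycleIndex_le ?_) ?_
  · rw [pow_succ', mul_apply, hy.pow_cycleIndex_apply]
  · have h := hcy'.pow_cycleIndex_apply
    rw [← Nat.sub_add_cancel (Nat.one_le_iff_ne_zero.2 hpos), pow_succ', mul_apply] at h
    have := cycleIndex_le (c.injective h)
    omega

theorem SameCycle.cycleIndex_inv_apply (hy : c.SameCycle x y) (hyx : y ≠ x) :
    c.cycleIndex x y = c.cycleIndex x (c⁻¹ y) + 1 := by
  have hcy : c (c⁻¹ y) = y := c.apply_symm_apply y
  have hy' : c.SameCycle x (c⁻¹ y) := hy.symm_apply_right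
  have h := hy'.cycleIndex_apply (by rwa [hcy])
  rwa [hcy] at h

theorem SameCycle.cycleIndex_add_one_eq_period (hy : c.SameCycle x y) (hcy : c y = x) :
    c.cycleIndex x y + 1 = MulAction.period c x := by
  have hdvd : MulAction.period c x ∣ c.cycleIndex x y + 1 := by
    rw [← MulAction.pow_smul_eq_iff_period_dvd, Perm.smul_def, pow_succ', mul_apply,
      hy.pow_cycleIndex_apply, hcy]
  exact le_antisymm hy.cycleIndex_lt_period (Nat.le_of_dvd (Nat.succ_pos _) hdvd)

theorem SameCycle.apply_ne_of_odd_cycleIndex (hodd : Odd (MulAction.period c x))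
    (hy : c.SameCycle x y) (hk : Odd (c.cycleIndex x y)) : c y ≠ x := fun hcy => by
  have := hy.cycleIndex_add_one_eq_period hcy
  rw [← this, Nat.odd_add_one, Nat.not_odd_iff_even] at hodd
  exact Nat.not_even_iff_odd.2 hk hodd

theorem SameCycle.pathPartner_ne (hodd : Odd (MulAction.period c x)) (hy : c.SameCycle x y)
    (hyx : y ≠ x) : c.pathPartner x y ≠ x := by
  unfold pathPartner
  split_ifs with hk
  · intro h
    have h1 := hy.cycleIndex_inv_apply hyx
    rw [h, cycleIndex_self] at h1
    rw [h1] at hk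
    exact Nat.not_even_one hk
  · exact hy.apply_ne_of_odd_cycleIndex hodd (Nat.not_even_iff_odd.1 hk)

theorem SameCycle.pathPartner_pathPartner (hodd : Odd (MulAction.period c x))
    (hy : c.SameCycle x y) (hyx : y ≠ x) : c.pathPartner x (c.pathPartner x y) = y := by
  have hk := hy.cycleIndex_inv_apply hyx
  by_cases he : Even (c.cycleIndex x y)
  · have hk' : ¬ Even (c.cycleIndex x (c⁻¹ y)) := by rwa [hk, Nat.even_add_one] at he
    simp only [pathPartner, he, hk', if_true, if_false]
    exact c.apply_symm_apply y
  · have hcy := hy.apply_ne_of_odd_cycleIndex hodd (Nat.not_even_iff_odd.1 he)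
    have hk' : Even (c.cycleIndex x (c y)) := by
      rw [hy.cycleIndex_apply hcy, Nat.even_add_one]; exact he
    simp only [pathPartner, he, hk', if_true, if_false]
    exact c.symm_apply_apply y

theorem SameCycle.rel_pathPartner {R : α → α → Prop} (hsymm : ∀ {y z}, R y z → R z y)
    (huniq : ∀ {y z z'}, R y z → R y z' → z = z') (hbase : ¬ R x (c x))
    (hstep : ∀ y, c.SameCycle x y → y ≠ x → R y (c y) ∨ R y (c⁻¹ y))
    (hy : c.SameCycle x y) (hyx : y ≠ x) : R y (c.pathPartner x y) := by
  induction hk : c.cycleIndex x y using Nat.strong_induction_on generalizing y with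
  | _ k ih =>
  subst hk
  have hz : c.SameCycle x (c⁻¹ y) := hy.symm_apply_right
  have hcz : c (c⁻¹ y) = y := c.apply_symm_apply y
  have hk := hy.cycleIndex_inv_apply hyx
  by_cases he : Even (c.cycleIndex x y)
  · have hze : ¬ Even (c.cycleIndex x (c⁻¹ y)) := by rwa [hk, Nat.even_add_one] at he
    have hzx : c⁻¹ y ≠ x := fun h => hze (by simp [h])
    have hzy := ih _ (by omega) hz hzx (Eq.refl _)
    rw [pathPartner, if_neg hze, hcz] at hzy
    rw [pathPartner, if_pos he]
    exact hsymm hzy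
  · rw [pathPartner, if_neg he]
    refine (hstep y hy hyx).resolve_right fun hyz => ?_
    by_cases hzx : c⁻¹ y = x
    · exact hbase (by rw [← hzx, hcz]; exact hsymm hyz)
    · have hze : Even (c.cycleIndex x (c⁻¹ y)) := by
        rwa [hk, Nat.even_add_one, not_not] at he
      have hzz := ih _ (by omega) hz hzx (Eq.refl _)
      rw [pathPartner, if_pos hze] at hzz
      -- then `c⁻¹ y` would be both one step before and one step after `y`
      have hcy : c y = c⁻¹ y := c.eq_symm_apply.1 (huniq (hsymm hyz) hzz)
      have := hy.cycleIndex_apply (hcy ▸ hzx)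
      rw [hcy] at this
      omega

end Finite
end Equiv.Perm

namespace SimpleGraph.Subgraph

variable {V : Type*} {G : SimpleGraph V} {g : V → V}

def ofInvolutive (g : V → V) (hg : Function.Involutive g) (hadj : ∀ v, G.Adj v (g v)) :
    G.Subgraph where
  verts := Set.univ
  Adj v w := g v = w
  adj_sub := by rintro v _ rfl; exact hadj v
  edge_vert _ := trivial
  symm := ⟨by rintro v _ rfl; exact hg v⟩

variable (hg : Function.Involutive g) (hadj : ∀ v, G.Adj v (g v))

theorem isPerfectMatching_ofInvolutive : (ofInvolutive g hg hadj).IsPerfectMatching :=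
  isPerfectMatching_iff.2 fun v => ⟨g v, rfl, fun _ h => Eq.symm h⟩

theorem IsPerfectMatching.eq_ofInvolutive {M : G.Subgraph} (hM : M.IsPerfectMatching)
    (h : ∀ v, M.Adj v (g v)) : M = ofInvolutive g hg hadj := by
  ext v w
  · simp [hM.2.verts_eq_univ, ofInvolutive]
  · exact ⟨fun hvw => hM.1.eq_of_adj_left (h v) hvw, fun hvw => hvw ▸ h v⟩

end SimpleGraph.Subgraph

section matchGraph

open Equiv.Perm SimpleGraph Subgraph

variable {n : ℕ} {σ : Fin (2*n) → Equiv.Perm (Fin (2*n))}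

theorem matchGraph_adj_cases {v u w z : Fin (2*n)} {h : v ≠ u} {h' : w ≠ z}
    (hadj : (matchGraph n σ).Adj ⟨(v, u), h⟩ ⟨(w, z), h'⟩) :
    w = u ∧ z = v ∨ w = v ∧ (z = σ v u ∨ z = (σ v)⁻¹ u) := by
  simp only [matchGraph, fromRel_adj] at hadj
  rcases hadj.2 with (⟨rfl, rfl⟩ | ⟨rfl, rfl⟩) | (⟨rfl, rfl⟩ | ⟨rfl, rfl⟩)
  · exact Or.inl ⟨rfl, rfl⟩
  · exact Or.inr ⟨rfl, Or.inl rfl⟩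
  · exact Or.inl ⟨rfl, rfl⟩
  · exact Or.inr ⟨rfl, Or.inr ((σ w).symm_apply_apply z).symm⟩

theorem odd_period_of_isCycle (hfix : ∀ v u, σ v u = u ↔ u = v) (hcyc : ∀ v, (σ v).IsCycle)
    (v u : Fin (2*n)) : Odd (MulAction.period (σ v) u) := by
  have hsupp : (σ v).support = Finset.univ.erase v := by
    ext w
    simp [hfix]
  have hord : orderOf (σ v) = 2 * n - 1 := by
    rw [(hcyc v).orderOf, hsupp, Finset.card_erase_of_mem (Finset.mem_univ v), Finset.card_univ,
      Fintype.card_fin]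
  have hn := v.pos
  exact Odd.of_dvd_nat (hord ▸ ⟨n - 1, by omega⟩) (MulAction.period_dvd_orderOf _ _)

theorem sameCycle_of_ne (hfix : ∀ v u, σ v u = u ↔ u = v) (hcyc : ∀ v, (σ v).IsCycle)
    {v u w : Fin (2*n)} (hu : u ≠ v) (hw : w ≠ v) : (σ v).SameCycle u w :=
  (hcyc v).sameCycle (mt (hfix v u).1 hu) (mt (hfix v w).1 hw)

variable (hfix : ∀ v u, σ v u = u ↔ u = v) (f : Fin (2*n) → Fin (2*n))

/-- The matching `M*` of `D`, as the involution sending each vertex to its partner. -/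
noncomputable def matchingExtension (a : Vt n) : Vt n :=
  if a.1.2 = f a.1.1 then ⟨a.1.swap, a.2.symm⟩
  else ⟨(a.1.1, (σ a.1.1).pathPartner (f a.1.1) a.1.2),
    (pathPartner_ne_of_isFixedPt ((hfix _ _).2 rfl) a.2.symm).symm⟩

theorem matchGraph_adj_matchingExtension (a : Vt n) :
    (matchGraph n σ).Adj a (matchingExtension hfix f a) := by
  obtain ⟨⟨v, u⟩, h⟩ := a
  rw [matchingExtension]
  split_ifs with hu
  · exact (fromRel_adj _ _ _).2
      ⟨fun he => h (congrArg (·.1.1) he), Or.inl (Or.inl ⟨rfl, rfl⟩)⟩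
  · refine (fromRel_adj _ _ _).2 ⟨fun he => ?_, ?_⟩
    · exact pathPartner_ne_self (mt (hfix v u).1 (Ne.symm h)) (congrArg (·.1.2) he).symm
    · rcases apply_pathPartner_eq_or (c := σ v) (x := f v) (y := u) with h' | h'
      · exact Or.inl (Or.inr ⟨rfl, h'.symm⟩)
      · exact Or.inr (Or.inr ⟨rfl, h'⟩)

theorem matchingExtension_swap_iff {u v : Fin (2*n)} (h : u ≠ v) :
    matchingExtension hfix f ⟨(u, v), h⟩ = ⟨(v, u), h.symm⟩ ↔ f u = v := by
  rw [matchingExtension]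
  split_ifs with hv
  · exact ⟨fun _ => hv.symm, fun _ => rfl⟩
  · exact ⟨fun he => absurd (congrArg (·.1.1) he) h, fun he => absurd he.symm hv⟩

theorem matchingExtension_involutive (hcyc : ∀ v, (σ v).IsCycle) (hf1 : ∀ v, f v ≠ v)
    (hf2 : ∀ v, f (f v) = v) : Function.Involutive (matchingExtension hfix f) := by
  rintro ⟨⟨v, u⟩, h⟩
  by_cases hu : u = f v
  · have hv : v = f u := by rw [hu, hf2]
    simp only [matchingExtension, if_pos hu, Prod.swap_prod_mk, if_pos hv]
  · have hy := sameCycle_of_ne hfix hcyc (hf1 v) (Ne.symm h)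
    have hodd := odd_period_of_isCycle hfix hcyc v (f v)
    have hp := hy.pathPartner_ne hodd hu
    simp only [matchingExtension, if_neg hu, if_neg hp, hy.pathPartner_pathPartner hodd hu]

theorem SimpleGraph.Subgraph.IsPerfectMatching.adj_matchingExtension
    (hcyc : ∀ v, (σ v).IsCycle) (hf1 : ∀ v, f v ≠ v) {M : (matchGraph n σ).Subgraph}
    (hM : M.IsPerfectMatching)
    (hcross : ∀ (u v : Fin (2*n)) (h : u ≠ v),
      (M.Adj ⟨(u, v), h⟩ ⟨(v, u), h.symm⟩ ↔ f u = v)) (a : Vt n) :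
    M.Adj a (matchingExtension hfix f a) := by
  obtain ⟨⟨v, u⟩, h⟩ := a
  rw [matchingExtension]
  split_ifs with hu
  · exact (hcross v u h).2 hu.symm
  let R (y z : Fin (2*n)) : Prop :=
    ∃ (hy : v ≠ y) (hz : v ≠ z), M.Adj ⟨(v, y), hy⟩ ⟨(v, z), hz⟩
  have hsymm {y z} : R y z → R z y := fun ⟨hy, hz, hyz⟩ => ⟨hz, hy, hyz.symm⟩
  have huniq {y z z'} : R y z → R y z' → z = z' := fun ⟨_, _, h₁⟩ ⟨_, _, h₂⟩ =>
    congrArg (·.1.2) (hM.1.eq_of_adj_left h₁ h₂)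
  have hbase : ¬ R (f v) (σ v (f v)) := fun ⟨hv, _, hadj⟩ =>
    hf1 v (congrArg (·.1.1) (hM.1.eq_of_adj_left ((hcross v (f v) hv).2 rfl) hadj))
  have hstep (y) (hy : (σ v).SameCycle (f v) y) (hyf : y ≠ f v) :
      R y (σ v y) ∨ R y ((σ v)⁻¹ y) := by
    have hvy : v ≠ y := by
      rintro rfl
      exact hf1 v (hy.eq_of_right ((hfix v v).2 rfl))
    obtain ⟨⟨⟨w, z⟩, hwz⟩, hadj, -⟩ := isPerfectMatching_iff.1 hM ⟨(v, y), hvy⟩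
    rcases matchGraph_adj_cases (M.adj_sub hadj) with ⟨hw, hz⟩ | ⟨hw, hz | hz⟩ <;> subst w z
    · exact absurd ((hcross _ _ hvy).1 hadj).symm hyf
    · exact Or.inl ⟨hvy, hwz, hadj⟩
    · exact Or.inr ⟨hvy, hwz, hadj⟩
  obtain ⟨_, _, hadj⟩ := (sameCycle_of_ne hfix hcyc (hf1 v) (Ne.symm h)).rel_pathPartner
    (R := R) hsymm huniq hbase hstep hu
  exact hadj

end matchGraph

theorem stmt8_general (n : ℕ) (σ : Fin (2*n) → Equiv.Perm (Fin (2*n)))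
    (hfix : ∀ v u, σ v u = u ↔ u = v) (hcyc : ∀ v, (σ v).IsCycle)
    (f : Fin (2*n) → Fin (2*n)) (hf1 : ∀ v, f v ≠ v) (hf2 : ∀ v, f (f v) = v) :
    ∃! M : (matchGraph n σ).Subgraph, M.IsPerfectMatching ∧
      ∀ (u v : Fin (2*n)) (h : u ≠ v),
        (M.Adj ⟨(u, v), h⟩ ⟨(v, u), h.symm⟩ ↔ f u = v) := by
  have hinv := matchingExtension_involutive hfix f hcyc hf1 hf2
  have hadj := matchGraph_adj_matchingExtension hfix f
  refine ⟨.ofInvolutive _ hinv hadj,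
    ⟨SimpleGraph.Subgraph.isPerfectMatching_ofInvolutive hinv hadj,
      fun u v h => matchingExtension_swap_iff hfix f h⟩, ?_⟩
  rintro M ⟨hM, hcross⟩
  exact hM.eq_ofInvolutive hinv hadj (hM.adj_matchingExtension hfix f hcyc hf1 hcross)

/-- A perfect matching `M` of `K_{2n}` is encoded as a fixed-point-free involution `f`.
It extends to a unique perfect matching `M*` of `D` whose crossing edges are exactly
the edges `{[u,v],[v,u]}` with `{u,v} ∈ M`; inside each cycle `C^v` this matching is
the unique perfect matching of the path obtained by deleting the vertex `[v, f v]`. -/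
theorem stmt8 (n : ℕ) (hn : 2 ≤ n) (σ : Fin (2*n) → Equiv.Perm (Fin (2*n)))
    (hfix : ∀ v u, σ v u = u ↔ u = v) (hcyc : ∀ v, (σ v).IsCycle)
    (f : Fin (2*n) → Fin (2*n)) (hf1 : ∀ v, f v ≠ v) (hf2 : ∀ v, f (f v) = v) :
    ∃! M : (matchGraph n σ).Subgraph, M.IsPerfectMatching ∧
      ∀ (u v : Fin (2*n)) (h : u ≠ v),
        (M.Adj ⟨(u, v), h⟩ ⟨(v, u), h.symm⟩ ↔ f u = v) :=
  stmt8_general n σ hfix hcyc f hf1 hf2
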